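/- arXiv:math/0409262 — 5 statements merged into one kernel-verified Lean document; each statement's English description precedes it below -/
import Mathlib

section
/- Let V = ℂ^n and let X, Y be n×n complex matrices, i ∈ V a column vector, j ∈ V* a row vector, such that [X,Y] + i·j = 0 (where i·j denotes the rank ≤ 1 matrix given by the outer product). If X and Y are both upper triangular, then for any matrix A that is a (noncommutative) polynomial in X and Y, one has j·A·i = 0. -/
/-!
Upper triangular `X` and `Y` have the same diagonal products in either order, so `[X, Y]` is
strictly upper triangular, and hence so is `i·j = -[X, Y]`. Every `A` in the algebra generated by
`X` and `Y` is upper triangular, so `A · (i·j)` is strictly upper triangular, and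
`j·A·i = tr (A · (i·j)) = 0`.
-/

open Matrix

namespace Matrix

variable {m R : Type*} [Fintype m]

theorem dotProduct_mulVec_eq_trace_mul_vecMulVec [CommSemiring R] (A : Matrix m m R)
    (u v : m → R) : v ⬝ᵥ (A *ᵥ u) = trace (A * vecMulVec u v) := by
  rw [mul_vecMulVec, trace_vecMulVec, dotProduct_comm]

variable [LinearOrder m]

theorem IsUpperTriangular.mul_apply_self [NonUnitalNonAssocSemiring R] {M N : Matrix m m R}
    (hM : M.IsUpperTriangular) (hN : N.IsUpperTriangular) (k : m) :
    (M * N) k k = M k k * N k k := by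
  rw [mul_apply, Finset.sum_eq_single k]
  · intro l _ hlk
    rcases hlk.lt_or_gt with h | h
    · rw [hM h, zero_mul]
    · rw [hN h, mul_zero]
  · simp

theorem IsUpperTriangular.trace_mul_eq_zero [NonUnitalNonAssocSemiring R] {A B : Matrix m m R}
    (hA : A.IsUpperTriangular) (hB : B.IsUpperTriangular) (hB₀ : B.diag = 0) :
    trace (A * B) = 0 :=
  Finset.sum_eq_zero fun k _ => by
    rw [diag_apply, hA.mul_apply_self hB, ← diag_apply B, hB₀, Pi.zero_apply, mul_zero]

theorem IsUpperTriangular.commutator [NonUnitalNonAssocRing R] {M N : Matrix m m R}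
    (hM : M.IsUpperTriangular) (hN : N.IsUpperTriangular) :
    (M * N - N * M).IsUpperTriangular :=
  (hM.mul hN).sub (hN.mul hM)

theorem IsUpperTriangular.diag_commutator [NonUnitalCommRing R] {M N : Matrix m m R}
    (hM : M.IsUpperTriangular) (hN : N.IsUpperTriangular) :
    (M * N - N * M).diag = 0 := by
  ext k
  rw [diag_sub, Pi.sub_apply, diag_apply, diag_apply, hM.mul_apply_self hN,
    hN.mul_apply_self hM, mul_comm, sub_self, Pi.zero_apply]

end Matrix

/-- If `[X,Y] + i·j = 0` and `X`, `Y` are upper triangular, then `j·A·i = 0` for any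
noncommutative polynomial `A` in `X` and `Y`. -/
theorem stmt0 (n : ℕ) (X Y : Matrix (Fin n) (Fin n) ℂ) (i j : Fin n → ℂ)
    (heq : X * Y - Y * X + vecMulVec i j = 0)
    (hX : X.BlockTriangular id) (hY : Y.BlockTriangular id) :
    ∀ A ∈ Algebra.adjoin ℂ ({X, Y} : Set (Matrix (Fin n) (Fin n) ℂ)),
      j ⬝ᵥ (A *ᵥ i) = 0 := by
  intro A hAdj
  have hA : A.IsUpperTriangular := by
    refine Algebra.adjoin_le (S := blockTriangularSubalgebra ℂ ℂ id) ?_ hAdj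
    rintro M (rfl | rfl)
    exacts [hX, hY]
  have hij : vecMulVec i j = -(X * Y - Y * X) := eq_neg_of_add_eq_zero_right heq
  rw [dotProduct_mulVec_eq_trace_mul_vecMulVec, hij]
  exact hA.trace_mul_eq_zero (IsUpperTriangular.commutator hX hY).neg
    (by rw [diag_neg, IsUpperTriangular.diag_commutator hX hY, neg_zero])
end

section
/- Let X be an n×n complex matrix consisting of a single Jordan block with eigenvalue λ. Then the orbits of the centralizer group G^X = {g ∈ GL_n(ℂ) : gX = Xg} acting on ℂ^n are exactly the zero orbit together with the sets {v ∈ ℂ^n : (X - λ)^k v ≠ 0 and (X - λ)^{k+1} v = 0} for k = 0, 1, ..., n-1. In particular, G^X acts on ℂ^n with finitely many orbits. -/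
/-!
Put `N = X - λ`, the nilpotent shift `e_k ↦ e_{k-1}`. An invertible matrix commutes with `X` iff
it commutes with `N`, and then it maps `ker N^(k+1) \ ker N^k` to itself. Conversely, a vector
`v` in this set is `v_k e_k` plus terms in `e_i`, `i < k`, so `v = p(N) e_k` with
`p(N) = ∑_{i ≤ k} v_i N^(k-i)`. This commutes with `N` and is invertible since its constant term
is `v_k ≠ 0` and `N` is nilpotent. Hence each of these sets is the orbit of `e_k`, and since
`N^n = 0` every nonzero vector lies in one of them.
-/

open Matrix Finset

section General

variable {ι R : Type*} [Fintype ι] [DecidableEq ι] [CommRing R]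

def centralizerOrbit (A : Matrix ι ι R) (v : ι → R) : Set (ι → R) :=
  {w | ∃ g : GL ι R, Commute (g : Matrix ι ι R) A ∧ (g : Matrix ι ι R) *ᵥ v = w}

def heightSet (A : Matrix ι ι R) (k : ℕ) : Set (ι → R) :=
  {v | A ^ k *ᵥ v ≠ 0 ∧ A ^ (k + 1) *ᵥ v = 0}

lemma commute_sub_smul_one_iff {g A : Matrix ι ι R} {c : R} :
    Commute g (A - c • 1) ↔ Commute g A := by
  have hc : Commute g (c • 1) := (Commute.one_right g).smul_right c
  exact ⟨fun h => by simpa using h.add_right hc, fun h => h.sub_right hc⟩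

lemma centralizerOrbit_sub_smul_one (A : Matrix ι ι R) (c : R) :
    centralizerOrbit (A - c • 1) = centralizerOrbit A := by
  funext v
  simp only [centralizerOrbit, commute_sub_smul_one_iff]

lemma centralizerOrbit_zero (A : Matrix ι ι R) : centralizerOrbit A 0 = {0} := by
  ext w
  simp only [centralizerOrbit, mulVec_zero, Set.mem_ofPred_eq, Set.mem_singleton_iff]
  exact ⟨fun ⟨_, _, hw⟩ => hw.symm, fun hw => ⟨1, Commute.one_left A, hw.symm⟩⟩

lemma centralizerOrbit_eq_of_mem {A : Matrix ι ι R} {v w : ι → R}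
    (hw : w ∈ centralizerOrbit A v) : centralizerOrbit A w = centralizerOrbit A v := by
  obtain ⟨g, hg, rfl⟩ := hw
  ext u
  constructor
  · rintro ⟨h, hh, rfl⟩
    exact ⟨h * g, by simpa using hh.mul_left hg, by simp [mulVec_mulVec]⟩
  · rintro ⟨h, hh, rfl⟩
    refine ⟨h * g⁻¹, by simpa using hh.mul_left hg.units_inv_left, ?_⟩
    simp [mulVec_mulVec, mul_assoc]

lemma centralizerOrbit_subset_heightSet {A : Matrix ι ι R} {v : ι → R} {k : ℕ}
    (hv : v ∈ heightSet A k) : centralizerOrbit A v ⊆ heightSet A k := by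
  rintro _ ⟨g, hg, rfl⟩
  have hpow (j : ℕ) :
      A ^ j *ᵥ ((g : Matrix ι ι R) *ᵥ v) = (g : Matrix ι ι R) *ᵥ (A ^ j *ᵥ v) := by
    rw [mulVec_mulVec, mulVec_mulVec, (hg.pow_right j).eq]
  refine ⟨?_, by rw [hpow, hv.2, mulVec_zero]⟩
  rw [hpow]
  intro h
  apply hv.1
  simpa [mulVec_mulVec] using congrArg (((g⁻¹ : GL ι R) : Matrix ι ι R) *ᵥ ·) h

lemma exists_mem_heightSet {A : Matrix ι ι R} {m : ℕ} (hA : A ^ m = 0) {v : ι → R}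
    (hv : v ≠ 0) : ∃ k < m, v ∈ heightSet A k := by
  classical
  have hex : ∃ j, A ^ j *ᵥ v = 0 := ⟨m, by simp [hA]⟩
  have hpos : Nat.find hex ≠ 0 := fun h => hv (by simpa [h] using Nat.find_spec hex)
  have hle : Nat.find hex ≤ m := Nat.find_min' hex (by simp [hA])
  refine ⟨Nat.find hex - 1, by omega, Nat.find_min hex (by omega), ?_⟩
  rw [Nat.sub_add_cancel (Nat.pos_of_ne_zero hpos)]
  exact Nat.find_spec hex

end General

section UpperShift

variable {R : Type*} [CommRing R] {n : ℕ}

variable (R n) in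
def upperShift : Matrix (Fin n) (Fin n) R :=
  of fun r s => if (s : ℕ) = r + 1 then 1 else 0

lemma upperShift_mulVec_apply (v : Fin n → R) (r : Fin n) :
    (upperShift R n *ᵥ v) r = if h : r + 1 < n then v ⟨r + 1, h⟩ else 0 := by
  simp only [mulVec, dotProduct, upperShift, of_apply, ite_mul, one_mul, zero_mul]
  split_ifs with h
  · rw [Finset.sum_eq_single ⟨r + 1, h⟩ (fun s _ hs => if_neg fun h' => hs (Fin.ext h'))
      (by simp)]
    simp
  · exact Finset.sum_eq_zero fun s _ => if_neg (by omega)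

lemma upperShift_pow_mulVec_apply (j : ℕ) (v : Fin n → R) (r : Fin n) :
    (upperShift R n ^ j *ᵥ v) r = if h : r + j < n then v ⟨r + j, h⟩ else 0 := by
  induction j generalizing r with
  | zero => simp
  | succ j ih =>
    rw [pow_succ', ← mulVec_mulVec, upperShift_mulVec_apply]
    simp only [ih, Nat.add_right_comm _ 1 j, Nat.add_assoc]
    split_ifs <;> first | rfl | omega

lemma upperShift_pow_self : upperShift R n ^ n = 0 := by
  ext r s
  simpa [mulVec_single_one] using upperShift_pow_mulVec_apply (R := R) n (Pi.single s 1) r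

lemma upperShift_pow_succ_mulVec_eq_zero_iff {k : ℕ} {v : Fin n → R} :
    upperShift R n ^ (k + 1) *ᵥ v = 0 ↔ ∀ j : Fin n, k < j → v j = 0 := by
  constructor
  · intro h j hj
    have := congrFun h ⟨j - (k + 1), by omega⟩
    simpa [upperShift_pow_mulVec_apply, Nat.sub_add_cancel (show k + 1 ≤ j by omega)]
      using this
  · intro h
    funext r
    rw [upperShift_pow_mulVec_apply]
    split_ifs
    · exact h _ (by simp only; omega)
    · rfl

lemma upperShift_pow_mulVec_eq_zero_iff {k : Fin n} {v : Fin n → R}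
    (hv : ∀ j : Fin n, k < j → v j = 0) :
    upperShift R n ^ (k : ℕ) *ᵥ v = 0 ↔ v k = 0 := by
  constructor
  · intro h
    simpa [upperShift_pow_mulVec_apply] using congrFun h ⟨0, k.pos⟩
  · intro h
    funext r
    rw [upperShift_pow_mulVec_apply]
    split_ifs
    · rcases Nat.eq_zero_or_pos r with hr | hr
      · simpa [hr] using h
      · exact hv _ (by simp only [Fin.lt_def]; omega)
    · rfl

lemma mem_heightSet_upperShift_iff {k : Fin n} {v : Fin n → R} :
    v ∈ heightSet (upperShift R n) k ↔ v k ≠ 0 ∧ ∀ j : Fin n, k < j → v j = 0 := by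
  rw [heightSet, Set.mem_ofPred_eq, upperShift_pow_succ_mulVec_eq_zero_iff]
  exact ⟨fun ⟨h₁, h₂⟩ => ⟨(upperShift_pow_mulVec_eq_zero_iff h₂).not.mp h₁, h₂⟩,
    fun ⟨h₁, h₂⟩ => ⟨(upperShift_pow_mulVec_eq_zero_iff h₂).not.mpr h₁, h₂⟩⟩

lemma upperShift_pow_sub_mulVec_single {i k : Fin n} (hik : i ≤ k) (c : R) :
    upperShift R n ^ ((k : ℕ) - (i : ℕ)) *ᵥ Pi.single k c = Pi.single i c := by
  funext r
  rw [upperShift_pow_mulVec_apply]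
  simp only [Pi.single_apply, Fin.ext_iff, Fin.le_def] at hik ⊢
  split_ifs <;> first | rfl | omega

end UpperShift

section Orbits

variable {K : Type*} [Field K] {n : ℕ}

lemma isUnit_sum_smul_upperShift_pow {k : Fin n} {v : Fin n → K} (hk : v k ≠ 0) :
    IsUnit (∑ i ∈ Iic k, v i • upperShift K n ^ ((k : ℕ) - (i : ℕ))) := by
  have hN : IsNilpotent (upperShift K n) := ⟨n, upperShift_pow_self⟩
  rw [← Iio_insert, sum_insert notMem_Iio_self, Nat.sub_self, pow_zero]
  refine IsNilpotent.isUnit_add_left_of_commute ?_ ?_ ((Commute.one_right _).smul_right _)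
  · refine Commute.isNilpotent_sum (fun i hi => (hN.pow_of_pos ?_).smul _)
      fun i j _ _ => (((Commute.refl _).pow_pow _ _).smul_left _).smul_right _
    simp only [mem_Iio, Fin.lt_def] at hi
    omega
  · simpa [Algebra.algebraMap_eq_smul_one] using
      hk.isUnit.map (algebraMap K (Matrix (Fin n) (Fin n) K))

lemma heightSet_upperShift_subset_centralizerOrbit_single (k : Fin n) :
    heightSet (upperShift K n) k ⊆ centralizerOrbit (upperShift K n) (Pi.single k 1) := by
  intro v hv
  obtain ⟨hk, htail⟩ := mem_heightSet_upperShift_iff.mp hv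
  refine ⟨(isUnit_sum_smul_upperShift_pow hk).unit, ?_, ?_⟩
  · rw [IsUnit.unit_spec]
    exact Commute.sum_left _ _ _ fun i _ => ((Commute.refl _).pow_left _).smul_left _
  · rw [IsUnit.unit_spec, sum_mulVec]
    calc ∑ i ∈ Iic k, (v i • upperShift K n ^ ((k : ℕ) - (i : ℕ))) *ᵥ Pi.single k 1
        = ∑ i ∈ Iic k, Pi.single i (v i) := sum_congr rfl fun i hi => by
          rw [smul_mulVec, upperShift_pow_sub_mulVec_single (mem_Iic.mp hi), ← Pi.single_smul,
            smul_eq_mul, mul_one]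
      _ = ∑ i, Pi.single i (v i) := sum_subset (subset_univ _) fun i _ hi => by
          rw [htail i (by simpa using hi), Pi.single_zero]
      _ = v := univ_sum_single v

lemma centralizerOrbit_upperShift_single (k : Fin n) :
    centralizerOrbit (upperShift K n) (Pi.single k 1) = heightSet (upperShift K n) k :=
  (centralizerOrbit_subset_heightSet (mem_heightSet_upperShift_iff.mpr
    ⟨by simp, fun j hj => Pi.single_eq_of_ne hj.ne' 1⟩)).antisymm
    (heightSet_upperShift_subset_centralizerOrbit_single k)

lemma centralizerOrbit_upperShift_of_mem {k : Fin n} {v : Fin n → K}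
    (hv : v ∈ heightSet (upperShift K n) k) :
    centralizerOrbit (upperShift K n) v = heightSet (upperShift K n) k := by
  rw [centralizerOrbit_eq_of_mem (heightSet_upperShift_subset_centralizerOrbit_single k hv),
    centralizerOrbit_upperShift_single]

variable (K n) in
lemma range_centralizerOrbit_upperShift :
    Set.range (centralizerOrbit (upperShift K n)) =
      insert {0} (Set.range fun k : Fin n => heightSet (upperShift K n) k) := by
  ext O
  constructor
  · rintro ⟨v, rfl⟩
    by_cases hv : v = 0
    · exact Or.inl (by rw [hv, centralizerOrbit_zero])
    · obtain ⟨k, hk, hvk⟩ := exists_mem_heightSet upperShift_pow_self hv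
      exact Or.inr
        ⟨⟨k, hk⟩, (centralizerOrbit_upperShift_of_mem (k := ⟨k, hk⟩) hvk).symm⟩
  · rintro (rfl | ⟨k, rfl⟩)
    · exact ⟨0, centralizerOrbit_zero _⟩
    · exact ⟨Pi.single k 1, centralizerOrbit_upperShift_single k⟩

end Orbits

theorem stmt2_general (n : ℕ) (lam : ℂ) (X : Matrix (Fin n) (Fin n) ℂ)
    (hX : ∀ r s : Fin n, X r s =
      (if (s : ℕ) = (r : ℕ) + 1 then 1 else 0) + (if s = r then lam else 0)) :
    ({O : Set (Fin n → ℂ) | ∃ v : Fin n → ℂ,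
        O = {w | ∃ g : GL (Fin n) ℂ,
          (↑g : Matrix (Fin n) (Fin n) ℂ) * X = X * (↑g : Matrix (Fin n) (Fin n) ℂ) ∧
          (↑g : Matrix (Fin n) (Fin n) ℂ) *ᵥ v = w}}
      = insert {0} (Set.range (fun k : Fin n =>
          {v | ((X - lam • 1) ^ (k : ℕ)) *ᵥ v ≠ 0 ∧ ((X - lam • 1) ^ ((k : ℕ) + 1)) *ᵥ v = 0})))
    ∧ {O : Set (Fin n → ℂ) | ∃ v : Fin n → ℂ,
        O = {w | ∃ g : GL (Fin n) ℂ,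
          (↑g : Matrix (Fin n) (Fin n) ℂ) * X = X * (↑g : Matrix (Fin n) (Fin n) ℂ) ∧
          (↑g : Matrix (Fin n) (Fin n) ℂ) *ᵥ v = w}}.Finite := by
  have hN : X - lam • 1 = upperShift ℂ n := by
    ext r s
    simp [hX, upperShift, one_apply, eq_comm]
  have horbits : {O | ∃ v, O = centralizerOrbit X v} =
      insert {0} (Set.range fun k : Fin n => heightSet (X - lam • 1) k) := by
    rw [← centralizerOrbit_sub_smul_one X lam, hN, ← range_centralizerOrbit_upperShift]
    exact Set.ext fun O => exists_congr fun v => eq_comm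
  exact ⟨horbits, horbits ▸ (Set.finite_range _).insert {0}⟩

/-- For `X` a single Jordan block with eigenvalue `λ`, the orbits of the centralizer
`G^X` on `ℂ^n` are exactly `{0}` together with the sets
`{v : (X-λ)^k v ≠ 0 ∧ (X-λ)^{k+1} v = 0}` for `k = 0, …, n-1`; in particular there
are finitely many orbits. -/
theorem stmt2 (n : ℕ) (hn : 0 < n) (lam : ℂ) (X : Matrix (Fin n) (Fin n) ℂ)
    (hX : ∀ r s : Fin n, X r s =
      (if (s : ℕ) = (r : ℕ) + 1 then 1 else 0) + (if s = r then lam else 0)) :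
    ({O : Set (Fin n → ℂ) | ∃ v : Fin n → ℂ,
        O = {w | ∃ g : GL (Fin n) ℂ,
          (↑g : Matrix (Fin n) (Fin n) ℂ) * X = X * (↑g : Matrix (Fin n) (Fin n) ℂ) ∧
          (↑g : Matrix (Fin n) (Fin n) ℂ) *ᵥ v = w}}
      = insert {0} (Set.range (fun k : Fin n =>
          {v | ((X - lam • 1) ^ (k : ℕ)) *ᵥ v ≠ 0 ∧ ((X - lam • 1) ^ ((k : ℕ) + 1)) *ᵥ v = 0})))
    ∧ {O : Set (Fin n → ℂ) | ∃ v : Fin n → ℂ,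
        O = {w | ∃ g : GL (Fin n) ℂ,
          (↑g : Matrix (Fin n) (Fin n) ℂ) * X = X * (↑g : Matrix (Fin n) (Fin n) ℂ) ∧
          (↑g : Matrix (Fin n) (Fin n) ℂ) *ᵥ v = w}}.Finite :=
  stmt2_general n lam X hX
end

section
/- The set N × ℂ^n, where N is the set of nilpotent n×n complex matrices, is a finite union of orbits for the diagonal action of GL_n(ℂ) given by g·(X, v) = (gXg^{-1}, gv). -/
/-!
A nilpotent `A` turns `K^n` into a finitely generated `K[X]`-module killed by a power of `X`,
hence isomorphic to a product of truncated polynomial rings `K[X]/(X^{E j})` with `∑ E j = n`.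
Every element of `K[X]/(X^a)` is a unit times `X^b` for some `b ≤ a`, and multiplication by a unit
is a module automorphism, so the vector `v` can be moved to `(X^{B j})_j`. Hence the orbit of
`(A, v)` is determined by the discrete data `(E, B)`, all of whose entries are at most `n`.
-/

open Matrix Polynomial Module

section PairOrbit

variable {ι R : Type*} [Fintype ι] [DecidableEq ι] [CommRing R]

def pairOrbit (A : Matrix ι ι R) (v : ι → R) : Set (Matrix ι ι R × (ι → R)) :=
  {p | ∃ g : GL ι R, p = ((↑g : Matrix ι ι R) * A * (↑(g⁻¹) : Matrix ι ι R),
    (↑g : Matrix ι ι R) *ᵥ v)}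

lemma pairOrbit_conj (g : GL ι R) (A : Matrix ι ι R) (v : ι → R) :
    pairOrbit ((↑g : Matrix ι ι R) * A * (↑(g⁻¹) : Matrix ι ι R)) ((↑g : Matrix ι ι R) *ᵥ v) =
      pairOrbit A v := by
  ext p
  constructor
  · rintro ⟨h, rfl⟩
    refine ⟨h * g, ?_⟩
    simp only [Units.val_mul, _root_.mul_inv_rev, Matrix.mul_assoc, Matrix.mulVec_mulVec]
  · rintro ⟨h, rfl⟩
    refine ⟨h * g⁻¹, ?_⟩
    simp only [Units.val_mul, _root_.mul_inv_rev, inv_inv, Matrix.mul_assoc, Matrix.mulVec_mulVec,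
      ← Matrix.mul_assoc (↑(g⁻¹) : Matrix ι ι R), Units.inv_mul, Matrix.one_mul, Matrix.mul_one]

lemma exists_GL_conj_of_linearEquiv {A B : Matrix ι ι R} (f : (ι → R) ≃ₗ[R] (ι → R))
    (hf : f.toLinearMap ∘ₗ toLin' A = toLin' B ∘ₗ f) :
    ∃ g : GL ι R, (↑g : Matrix ι ι R) * A * (↑(g⁻¹) : Matrix ι ι R) = B ∧
      ∀ x, (↑g : Matrix ι ι R) *ᵥ x = f x := by
  let g : GL ι R := ⟨LinearMap.toMatrix' f, LinearMap.toMatrix' f.symm,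
    by rw [← LinearMap.toMatrix'_comp, f.comp_symm, LinearMap.toMatrix'_id],
    by rw [← LinearMap.toMatrix'_comp, f.symm_comp, LinearMap.toMatrix'_id]⟩
  have hgA : (↑g : Matrix ι ι R) * A = B * (↑g : Matrix ι ι R) := by
    simpa [LinearMap.toMatrix'_comp] using congrArg LinearMap.toMatrix' hf
  refine ⟨g, ?_, LinearMap.toMatrix'_mulVec f.toLinearMap⟩
  rw [hgA, Matrix.mul_assoc, Units.mul_inv, Matrix.mul_one]

lemma pairOrbit_eq_of_aevalEquiv {A B : Matrix ι ι R}
    (e : AEval' (toLin' A) ≃ₗ[R[X]] AEval' (toLin' B)) {v w : ι → R}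
    (he : e (AEval'.of _ v) = AEval'.of _ w) :
    pairOrbit A v = pairOrbit B w := by
  let f : (ι → R) ≃ₗ[R] (ι → R) :=
    AEval'.of (toLin' A) ≪≫ₗ e.restrictScalars R ≪≫ₗ (AEval'.of (toLin' B)).symm
  have hf : f.toLinearMap ∘ₗ toLin' A = toLin' B ∘ₗ f := LinearMap.ext fun x => by
    show (AEval'.of _).symm (e (AEval'.of _ (toLin' A x))) =
      toLin' B ((AEval'.of _).symm (e (AEval'.of _ x)))
    rw [← AEval'.X_smul_of, map_smul, AEval'.of_symm_X_smul]
  obtain ⟨g, rfl, hgx⟩ := exists_GL_conj_of_linearEquiv f hf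
  rw [show w = (g : Matrix ι ι R) *ᵥ v by simp [hgx, f, he], pairOrbit_conj]

end PairOrbit

def LinearEquiv.piSubtypeOfSubsingleton {R ι : Type*} [Semiring R] {φ : ι → Type*}
    [∀ i, AddCommMonoid (φ i)] [∀ i, Module R (φ i)] (p : ι → Prop) [DecidablePred p]
    (h : ∀ i, ¬p i → Subsingleton (φ i)) : (∀ i, φ i) ≃ₗ[R] ∀ i : Subtype p, φ i where
  toFun f i := f i
  invFun g i := if hi : p i then g ⟨i, hi⟩ else 0
  map_add' _ _ := rfl
  map_smul' _ _ := rfl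
  left_inv f := funext fun i => by
    by_cases hi : p i
    · simp [hi]
    · exact (h i hi).elim _ _
  right_inv g := funext fun i => by simp [i.2]

section TruncPoly

variable (K : Type*) [Field K]

abbrev TruncPoly (a : ℕ) : Type _ := K[X] ⧸ Ideal.span {(X : K[X]) ^ a}

instance (a : ℕ) : Module.Finite K (TruncPoly K a) :=
  (AdjoinRoot.powerBasis (pow_ne_zero a (X_ne_zero (R := K)))).finite

lemma finrank_truncPoly (a : ℕ) : finrank K (TruncPoly K a) = a := by
  have := (AdjoinRoot.powerBasis (pow_ne_zero a (X_ne_zero (R := K)))).finrank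
  rwa [AdjoinRoot.powerBasis_dim, natDegree_X_pow] at this

instance : Subsingleton (TruncPoly K 0) := by
  rw [Ideal.Quotient.subsingleton_iff, pow_zero, Ideal.span_singleton_one]

variable {K}

lemma TruncPoly.exists_unit_mul_eq_mk_X_pow {a : ℕ} (q : TruncPoly K a) :
    ∃ (u : (TruncPoly K a)ˣ) (b : ℕ), b ≤ a ∧
      (u : TruncPoly K a) * q = Ideal.Quotient.mk _ (X ^ b) := by
  have hXa : Ideal.Quotient.mk (Ideal.span {(X : K[X]) ^ a}) (X ^ a) = 0 :=
    Ideal.Quotient.eq_zero_iff_mem.2 (Ideal.mem_span_singleton_self _)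
  obtain ⟨f, rfl⟩ := Ideal.Quotient.mk_surjective q
  rcases eq_or_ne f 0 with rfl | hf
  · exact ⟨1, a, le_rfl, by rw [hXa, map_zero, mul_zero]⟩
  obtain ⟨g, hfg, hg⟩ := exists_eq_pow_rootMultiplicity_mul_and_not_dvd f hf 0
  rw [C_0, sub_zero] at hfg hg
  rw [hfg]
  set b := rootMultiplicity 0 f
  rcases le_or_gt a b with hab | hba
  · refine ⟨1, a, le_rfl, ?_⟩
    rw [hXa, Units.val_one, one_mul, Ideal.Quotient.eq_zero_iff_mem]
    exact Ideal.mul_mem_right _ _ (Ideal.mem_span_singleton.2 (pow_dvd_pow X hab))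
  · have hgX : g ∉ Ideal.span {(X : K[X])} := by rwa [Ideal.mem_span_singleton]
    have hmax : (Ideal.span {(X : K[X])}).IsMaximal :=
      PrincipalIdealRing.isMaximal_of_irreducible irreducible_X
    have hunit : IsUnit (Ideal.Quotient.mk (Ideal.span {(X : K[X])} ^ a) g) :=
      Ideal.Quotient.isUnit_mk_pow_of_notMem _ hgX
    rw [Ideal.span_singleton_pow] at hunit
    refine ⟨hunit.unit⁻¹, b, hba.le, ?_⟩
    rw [map_mul, mul_left_comm, IsUnit.val_inv_mul, mul_one]

end TruncPoly

section Decomposition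

variable {K : Type*} [Field K] {M : Type*} [AddCommGroup M] [Module K[X] M]

theorem exists_linearEquiv_pi_truncPoly [Module.Finite K[X] M]
    (hM : IsTorsion' M (Submonoid.powers (X : K[X]))) :
    ∃ (c : ℕ) (E : Fin c → ℕ), (∀ j, E j ≠ 0) ∧ Nonempty (M ≃ₗ[K[X]] ∀ j, TruncPoly K (E j)) := by
  obtain ⟨d, k, ⟨e⟩⟩ := torsion_by_prime_power_decomposition irreducible_X hM
  let σ := (Fintype.equivFin {i // k i ≠ 0}).symm
  refine ⟨_, fun j => k (σ j), fun j => (σ j).2, ⟨?_⟩⟩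
  exact e ≪≫ₗ DirectSum.linearEquivFunOnFintype _ _ _ ≪≫ₗ
    LinearEquiv.piSubtypeOfSubsingleton _ (fun i hi => by rw [not_not.1 hi]; infer_instance) ≪≫ₗ
    (LinearEquiv.piCongrLeft _ (fun i : {i // k i ≠ 0} => TruncPoly K (k i)) σ).symm

theorem exists_linearEquiv_pi_truncPoly_apply_eq [Module.Finite K[X] M]
    (hM : IsTorsion' M (Submonoid.powers (X : K[X]))) (m : M) :
    ∃ (c : ℕ) (E B : Fin c → ℕ), (∀ j, E j ≠ 0) ∧ (∀ j, B j ≤ E j) ∧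
      ∃ e : M ≃ₗ[K[X]] ∀ j, TruncPoly K (E j), e m = fun j => Ideal.Quotient.mk _ (X ^ B j) := by
  obtain ⟨c, E, hE, ⟨e⟩⟩ := exists_linearEquiv_pi_truncPoly hM
  choose u B hB hu using fun j => TruncPoly.exists_unit_mul_eq_mk_X_pow (e m j)
  exact ⟨c, E, B, hE, hB, e ≪≫ₗ LinearEquiv.piCongrRight fun j =>
    (LinearEquiv.smulOfUnit (u j)).restrictScalars K[X], funext hu⟩

end Decomposition

lemma isTorsion'_powers_X_of_isNilpotent {R M : Type*} [CommRing R] [AddCommGroup M] [Module R M]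
    {φ : M →ₗ[R] M} (hφ : IsNilpotent φ) : IsTorsion' (AEval' φ) (Submonoid.powers (X : R[X])) := by
  obtain ⟨k, hk⟩ := hφ
  intro m
  refine ⟨⟨X ^ k, k, rfl⟩, ?_⟩
  obtain ⟨x, rfl⟩ := (AEval'.of φ).surjective m
  rw [Submonoid.smul_def, AEval'.X_pow_smul_of, hk, zero_smul, map_zero]

section NormalForm

variable {K ι : Type*} [Field K] [Fintype ι] [DecidableEq ι]

/-- `(A, v)` corresponds to the element `(X ^ B j)_j` of `∏ j, K[X]/(X ^ E j)`, where `K^ι` is a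
`K[X]`-module through `X ↦ A`. -/
def HasNormalForm (A : Matrix ι ι K) (v : ι → K) {c : ℕ} (E B : Fin c → ℕ) : Prop :=
  ∃ e : AEval' (toLin' A) ≃ₗ[K[X]] ∀ j, TruncPoly K (E j),
    e (AEval'.of _ v) = fun j => Ideal.Quotient.mk _ (X ^ B j)

lemma HasNormalForm.pairOrbit_eq {A A' : Matrix ι ι K} {v v' : ι → K} {c : ℕ} {E B : Fin c → ℕ}
    (h : HasNormalForm A v E B) (h' : HasNormalForm A' v' E B) :
    pairOrbit A v = pairOrbit A' v' := by
  obtain ⟨e, he⟩ := h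
  obtain ⟨e', he'⟩ := h'
  exact pairOrbit_eq_of_aevalEquiv (e ≪≫ₗ e'.symm)
    (by rw [LinearEquiv.trans_apply, he, ← he', LinearEquiv.symm_apply_apply])

theorem exists_hasNormalForm {A : Matrix ι ι K} (hA : IsNilpotent A) (v : ι → K) :
    ∃ (c : ℕ) (E B : Fin c → ℕ), (∀ j, E j ≠ 0) ∧ (∀ j, B j ≤ E j) ∧
      ∑ j, E j = Fintype.card ι ∧ HasNormalForm A v E B := by
  have hM := isTorsion'_powers_X_of_isNilpotent (hA.map (toLinAlgEquiv' (R := K) (n := ι)))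
  obtain ⟨c, E, B, hE, hB, e, he⟩ := exists_linearEquiv_pi_truncPoly_apply_eq hM (AEval'.of _ v)
  refine ⟨c, E, B, hE, hB, ?_, e, he⟩
  calc ∑ j, E j = finrank K (∀ j, TruncPoly K (E j)) := by
        simp [Module.finrank_pi_fintype, finrank_truncPoly]
    _ = finrank K (AEval' (toLin' A)) := ((e.restrictScalars K).finrank_eq).symm
    _ = Fintype.card ι := by rw [← (AEval'.of _).finrank_eq, finrank_fintype_fun_eq_card]

end NormalForm

/-- `N × ℂ^n`, with `N` the nilpotent cone, is a finite union of orbits of the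
diagonal `GL_n(ℂ)`-action `g·(X,v) = (gXg⁻¹, gv)`. -/
theorem stmt4 (n : ℕ) :
    {O : Set (Matrix (Fin n) (Fin n) ℂ × (Fin n → ℂ)) |
      ∃ X : Matrix (Fin n) (Fin n) ℂ, IsNilpotent X ∧ ∃ v : Fin n → ℂ,
        O = {p | ∃ g : GL (Fin n) ℂ,
          p = ((↑g : Matrix (Fin n) (Fin n) ℂ) * X * (↑(g⁻¹) : Matrix (Fin n) (Fin n) ℂ),
               (↑g : Matrix (Fin n) (Fin n) ℂ) *ᵥ v)}}.Finite := by
  let orbitsWith (d : Σ c : Fin (n + 1), (Fin c → Fin (n + 1)) × (Fin c → Fin (n + 1))) :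
      Set (Set (Matrix (Fin n) (Fin n) ℂ × (Fin n → ℂ))) :=
    {O | ∃ A v, HasNormalForm A v (fun j => (d.2.1 j : ℕ)) (fun j => d.2.2 j) ∧ O = pairOrbit A v}
  have hsubsingleton : ∀ d, (orbitsWith d).Subsingleton := by
    rintro d _ ⟨A, v, h, rfl⟩ _ ⟨A', v', h', rfl⟩
    exact h.pairOrbit_eq h'
  refine (Set.finite_iUnion fun d => (hsubsingleton d).finite).subset ?_
  rintro _ ⟨A, hA, v, rfl⟩
  obtain ⟨c, E, B, hE, hB, hsum, h⟩ := exists_hasNormalForm hA v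
  rw [Fintype.card_fin] at hsum
  have hc : c ≤ n := by
    simpa [← hsum] using
      Finset.card_nsmul_le_sum Finset.univ E 1 fun j _ => Nat.one_le_iff_ne_zero.2 (hE j)
  have hEn : ∀ j, E j ≤ n := fun j =>
    hsum ▸ Finset.single_le_sum (fun _ _ => Nat.zero_le _) (Finset.mem_univ j)
  exact Set.mem_iUnion.2 ⟨⟨⟨c, Nat.lt_succ_of_le hc⟩, fun j => ⟨E j, Nat.lt_succ_of_le (hEn j)⟩,
    fun j => ⟨B j, Nat.lt_succ_of_le ((hB j).trans (hEn j))⟩⟩, A, v, h, rfl⟩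
end

section
/- Let k' ≤ k'' be integers in {0, ..., n}, let y_1, ..., y_n ∈ ℂ be pairwise distinct, let x_1, ..., x_n ∈ ℂ be arbitrary, set Y = diag(y_1, ..., y_n), i = (0,...,0,1,...,1) with n - k'' ones at the end, j = (1,...,1,0,...,0) with k' ones at the start, and define X by X_{rr} = x_r, X_{rs} = 1/(y_r - y_s) if r > k'' and s ≤ k', and X_{rs} = 0 otherwise. Then [X,Y] + i·j = 0, dim(ℂ[X,Y]·i) = n - k'', and dim(j·ℂ[X,Y]) = k'. -/
/-!
Since the `y r` are distinct, Lagrange interpolation puts every diagonal matrix into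
`ℂ[Y] ⊆ ℂ[X,Y]`, so `ℂ[X,Y]·i` contains `diag(u)·i = diag(i)·u` for every `u`: it contains the
range of `diag(i)`, the vectors supported on the support of `i`. Conversely, neither `X` nor `Y`
has a nonzero entry `(r, s)` with `i r = 0 ≠ i s`, so every element of `ℂ[X,Y]` preserves that
range. Hence `ℂ[X,Y]·i = range diag(i)`, of dimension `#{r | i r ≠ 0} = n - k''`; dually
`j·ℂ[X,Y] = range diag(j)` has dimension `k'`. The commutator identity is the entrywise
computation `(X Y - Y X) r s = X r s (y s - y r)`.
-/

open Matrix

theorem Fin.natCard_val_lt (n m : ℕ) : Nat.card {r : Fin n // (r : ℕ) < m} = min n m := by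
  rw [Nat.card_eq_fintype_card, Fintype.card_subtype, Fin.card_filter_val_lt]

theorem Fin.natCard_le_val (n m : ℕ) : Nat.card {r : Fin n // m ≤ (r : ℕ)} = n - m := by
  simp_rw [← not_lt]
  rw [Nat.card_eq_fintype_card, Fintype.card_subtype_compl, Fintype.card_fin,
    ← Nat.card_eq_fintype_card, Fin.natCard_val_lt]
  omega

namespace Matrix

section

variable {ι R : Type*} [Fintype ι] [DecidableEq ι] [CommSemiring R]

theorem mulVec_mem_of_mem_adjoin {s : Set (Matrix ι ι R)} {W : Submodule R (ι → R)}
    (hs : ∀ M ∈ s, ∀ w ∈ W, M *ᵥ w ∈ W) {A : Matrix ι ι R} (hA : A ∈ Algebra.adjoin R s) :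
    ∀ w ∈ W, A *ᵥ w ∈ W := by
  induction hA using Algebra.adjoin_induction with
  | mem M hM => exact hs M hM
  | algebraMap c =>
    intro w hw
    simpa [Algebra.algebraMap_eq_smul_one, smul_mulVec] using W.smul_mem c hw
  | add A B _ _ hA hB => exact fun w hw => add_mulVec A B w ▸ W.add_mem (hA w hw) (hB w hw)
  | mul A B _ _ hA hB => exact fun w hw => (mulVec_mulVec w A B) ▸ hA _ (hB w hw)

theorem vecMul_mem_of_mem_adjoin {s : Set (Matrix ι ι R)} {W : Submodule R (ι → R)}
    (hs : ∀ M ∈ s, ∀ w ∈ W, w ᵥ* M ∈ W) {A : Matrix ι ι R} (hA : A ∈ Algebra.adjoin R s) :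
    ∀ w ∈ W, w ᵥ* A ∈ W := by
  induction hA using Algebra.adjoin_induction with
  | mem M hM => exact hs M hM
  | algebraMap c =>
    intro w hw
    simpa [Algebra.algebraMap_eq_smul_one, vecMul_smul] using W.smul_mem c hw
  | add A B _ _ hA hB => exact fun w hw => vecMul_add A B w ▸ W.add_mem (hA w hw) (hB w hw)
  | mul A B _ _ hA hB => exact fun w hw => (vecMul_vecMul w A B) ▸ hB _ (hA w hw)

end

variable {ι K : Type*} [Fintype ι] [DecidableEq ι] [Field K]

theorem diagonal_mem_adjoin_diagonal {y : ι → K} (hy : Function.Injective y) (f : ι → K) :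
    diagonal f ∈ Algebra.adjoin K {diagonal y} := by
  set p := Lagrange.interpolate Finset.univ y f
  have hp : Polynomial.aeval y p = f := funext fun r => by
    rw [Polynomial.aeval_fn_apply, Polynomial.coe_aeval_eq_eval]
    exact Lagrange.eval_interpolate_at_node f hy.injOn (Finset.mem_univ r)
  change diagonalAlgHom K f ∈ Algebra.adjoin K {diagonalAlgHom K y}
  rw [← hp, ← Polynomial.aeval_algHom_apply]
  exact Polynomial.aeval_mem_adjoin_singleton K _

theorem mem_range_diagonal_iff {v w : ι → K} :
    w ∈ LinearMap.range (diagonal v).mulVecLin ↔ ∀ r, v r = 0 → w r = 0 := by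
  constructor
  · rintro ⟨u, rfl⟩ r hr
    simp [mulVec_diagonal, hr]
  · intro hw
    refine ⟨fun r => w r / v r, funext fun r => ?_⟩
    by_cases hr : v r = 0
    · simp [mulVec_diagonal, hr, hw r hr]
    · simp [mulVec_diagonal, mul_div_cancel₀ _ hr]

theorem mulVec_mem_range_diagonal {A : Matrix ι ι K} {v : ι → K}
    (hA : ∀ r s, v r = 0 → v s ≠ 0 → A r s = 0) {w : ι → K}
    (hw : w ∈ LinearMap.range (diagonal v).mulVecLin) :
    A *ᵥ w ∈ LinearMap.range (diagonal v).mulVecLin := by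
  rw [mem_range_diagonal_iff] at hw ⊢
  intro r hr
  refine Finset.sum_eq_zero fun s _ => ?_
  by_cases hs : v s = 0
  · simp [hw s hs]
  · simp [hA r s hr hs]

theorem vecMul_mem_range_diagonal {A : Matrix ι ι K} {v : ι → K}
    (hA : ∀ r s, v r ≠ 0 → v s = 0 → A r s = 0) {w : ι → K}
    (hw : w ∈ LinearMap.range (diagonal v).mulVecLin) :
    w ᵥ* A ∈ LinearMap.range (diagonal v).mulVecLin :=
  mulVec_transpose A w ▸ mulVec_mem_range_diagonal (fun r s hr hs => hA s r hs hr) hw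

theorem span_mulVec_eq_range_diagonal {s : Set (Matrix ι ι K)} {v : ι → K}
    (hdiag : ∀ f, diagonal f ∈ Algebra.adjoin K s)
    (hs : ∀ M ∈ s, ∀ r t, v r = 0 → v t ≠ 0 → M r t = 0) :
    Submodule.span K {w | ∃ A ∈ Algebra.adjoin K s, w = A *ᵥ v} =
      LinearMap.range (diagonal v).mulVecLin := by
  apply le_antisymm
  · rw [Submodule.span_le]
    rintro _ ⟨A, hA, rfl⟩
    exact mulVec_mem_of_mem_adjoin (fun M hM _ => mulVec_mem_range_diagonal (hs M hM)) hA v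
      (mem_range_diagonal_iff.2 fun _ => id)
  · rintro _ ⟨u, rfl⟩
    exact Submodule.subset_span ⟨diagonal u, hdiag u, by ext; simp [mulVec_diagonal, mul_comm]⟩

theorem span_vecMul_eq_range_diagonal {s : Set (Matrix ι ι K)} {v : ι → K}
    (hdiag : ∀ f, diagonal f ∈ Algebra.adjoin K s)
    (hs : ∀ M ∈ s, ∀ r t, v r ≠ 0 → v t = 0 → M r t = 0) :
    Submodule.span K {w | ∃ A ∈ Algebra.adjoin K s, w = v ᵥ* A} =
      LinearMap.range (diagonal v).mulVecLin := by
  apply le_antisymm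
  · rw [Submodule.span_le]
    rintro _ ⟨A, hA, rfl⟩
    exact vecMul_mem_of_mem_adjoin (fun M hM _ => vecMul_mem_range_diagonal (hs M hM)) hA v
      (mem_range_diagonal_iff.2 fun _ => id)
  · rintro _ ⟨u, rfl⟩
    exact Submodule.subset_span
      ⟨diagonal u, hdiag u, by ext; simp [mulVec_diagonal, vecMul_diagonal]⟩

theorem finrank_range_diagonal (v : ι → K) :
    Module.finrank K (LinearMap.range (diagonal v).mulVecLin) = Nat.card {r // v r ≠ 0} := by
  classical
  rw [Nat.card_eq_fintype_card]
  exact rank_diagonal v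

theorem mul_diagonal_sub_diagonal_mul_apply (X : Matrix ι ι K) (y : ι → K) (r s : ι) :
    (X * diagonal y - diagonal y * X) r s = X r s * (y s - y r) := by
  simp only [sub_apply, mul_diagonal, diagonal_mul]
  ring

end Matrix

theorem commutator_add_vecMulVec_eq_zero {K : Type*} [Field K] {n k' k'' : ℕ} (h1 : k' ≤ k'')
    {y x : Fin n → K} (hy : Function.Injective y) {X : Matrix (Fin n) (Fin n) K}
    {i j : Fin n → K}
    (hi : ∀ r : Fin n, i r = if k'' ≤ (r : ℕ) then 1 else 0)
    (hj : ∀ r : Fin n, j r = if (r : ℕ) < k' then 1 else 0)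
    (hX : ∀ r s : Fin n, X r s =
      if r = s then x r
      else if k'' ≤ (r : ℕ) ∧ (s : ℕ) < k' then 1 / (y r - y s) else 0) :
    X * diagonal y - diagonal y * X + vecMulVec i j = 0 := by
  ext r s
  rw [Matrix.add_apply, mul_diagonal_sub_diagonal_mul_apply, vecMulVec_apply, hX, hi, hj,
    Matrix.zero_apply]
  by_cases hrs : r = s
  · subst hrs
    split_ifs <;> first | omega | simp
  · rw [if_neg hrs]
    by_cases hblock : k'' ≤ (r : ℕ) ∧ (s : ℕ) < k'
    · rw [if_pos hblock, if_pos hblock.1, if_pos hblock.2]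
      field_simp [sub_ne_zero.2 (hy.ne hrs)]
      ring
    · rw [if_neg hblock]
      split_ifs <;> simp_all

/-- The explicit quadruples of Lemma 2.6: with `Y = diag(y)` (distinct `yᵣ`),
`i` having `n - k''` trailing ones, `j` having `k'` leading ones, and `X` as
prescribed, one has `[X,Y] + i·j = 0`, `dim ℂ[X,Y]·i = n - k''` and
`dim j·ℂ[X,Y] = k'`. -/
theorem stmt7 (n k' k'' : ℕ) (h1 : k' ≤ k'') (h2 : k'' ≤ n)
    (y x : Fin n → ℂ) (hy : Function.Injective y)
    (Y X : Matrix (Fin n) (Fin n) ℂ) (i j : Fin n → ℂ)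
    (hY : Y = Matrix.diagonal y)
    (hi : ∀ r : Fin n, i r = if k'' ≤ (r : ℕ) then 1 else 0)
    (hj : ∀ r : Fin n, j r = if (r : ℕ) < k' then 1 else 0)
    (hX : ∀ r s : Fin n, X r s =
      if r = s then x r
      else if k'' ≤ (r : ℕ) ∧ (s : ℕ) < k' then 1 / (y r - y s) else 0) :
    X * Y - Y * X + vecMulVec i j = 0
    ∧ Module.finrank ℂ (Submodule.span ℂ
        {v : Fin n → ℂ | ∃ A ∈ Algebra.adjoin ℂ ({X, Y} : Set (Matrix (Fin n) (Fin n) ℂ)),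
          v = A *ᵥ i}) = n - k''
    ∧ Module.finrank ℂ (Submodule.span ℂ
        {w : Fin n → ℂ | ∃ A ∈ Algebra.adjoin ℂ ({X, Y} : Set (Matrix (Fin n) (Fin n) ℂ)),
          w = Matrix.vecMul j A}) = k' := by
  subst hY
  have hi0 (r : Fin n) : i r = 0 ↔ (r : ℕ) < k'' := by rw [hi]; split_ifs <;> simp <;> omega
  have hj0 (r : Fin n) : j r = 0 ↔ k' ≤ (r : ℕ) := by rw [hj]; split_ifs <;> simp <;> omega
  have hX0 (r t : Fin n) (hrt : r ≠ t) (h : (r : ℕ) < k'' ∨ k' ≤ (t : ℕ)) : X r t = 0 := by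
    rw [hX, if_neg hrt, if_neg (by omega)]
  have hdiag (f : Fin n → ℂ) : diagonal f ∈ Algebra.adjoin ℂ {X, diagonal y} :=
    Algebra.adjoin_mono (Set.subset_insert _ _) (diagonal_mem_adjoin_diagonal hy f)
  refine ⟨commutator_add_vecMulVec_eq_zero h1 hy hi hj hX, ?_, ?_⟩
  · rw [span_mulVec_eq_range_diagonal hdiag ?_, finrank_range_diagonal]
    · simp_rw [ne_eq, hi0, not_lt]
      exact Fin.natCard_le_val n k''
    · rintro M (rfl | rfl) r t hr ht
      · exact hX0 r t (fun h => ht (h ▸ hr)) (.inl ((hi0 r).1 hr))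
      · exact diagonal_apply_ne _ fun h => ht (h ▸ hr)
  · rw [span_vecMul_eq_range_diagonal hdiag ?_, finrank_range_diagonal]
    · simp_rw [ne_eq, hj0, not_le, Fin.natCard_val_lt]
      omega
    · rintro M (rfl | rfl) r t hr ht
      · exact hX0 r t (fun h => hr (h ▸ ht)) (.inr ((hj0 t).1 ht))
      · exact diagonal_apply_ne _ fun h => hr (h ▸ ht)
end

section
/- Let X, Y ∈ M_n(ℂ) with [X,Y] of rank at most 1. Then X and Y can be simultaneously conjugated into upper triangular form: there exists g ∈ GL_n(ℂ) such that gXg^{-1} and gYg^{-1} are both upper triangular. -/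
open Matrix

section Laffey
open Module Submodule LinearMap

section Helpers

variable {V : Type} [AddCommGroup V] [Module ℂ V] [FiniteDimensional ℂ V]

lemma rank_restrict_le (p : Submodule ℂ V) (c : V →ₗ[ℂ] V) (hc : ∀ x ∈ p, c x ∈ p) :
    finrank ℂ (range (c.restrict hc)) ≤ finrank ℂ (range c) := by
  rw [← Submodule.finrank_map_subtype_eq p (range (c.restrict hc))]
  apply Submodule.finrank_mono
  rintro x hx
  rw [Submodule.mem_map] at hx
  obtain ⟨y, hy, rfl⟩ := hx
  obtain ⟨z, rfl⟩ := hy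
  exact ⟨z, rfl⟩

lemma rank_mapQ_le (p : Submodule ℂ V) (c : V →ₗ[ℂ] V) (hc : p ≤ p.comap c) :
    finrank ℂ (range (p.mapQ p c hc)) ≤ finrank ℂ (range c) := by
  have h1 : range (p.mapQ p c hc) = (range c).map p.mkQ := by
    calc range (p.mapQ p c hc) = range ((p.mapQ p c hc).comp p.mkQ) := by
          rw [LinearMap.range_comp, Submodule.range_mkQ, Submodule.map_top]
      _ = range (p.mkQ.comp c) := by rw [Submodule.mapQ_mkQ]
      _ = (range c).map p.mkQ := by rw [LinearMap.range_comp]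
  rw [h1]
  exact Submodule.finrank_map_le _ _

end Helpers

lemma exists_common_eigenvector :
    ∀ (N : ℕ) (V : Type) [AddCommGroup V] [Module ℂ V] [FiniteDimensional ℂ V],
      finrank ℂ V ≤ N → 0 < finrank ℂ V →
      ∀ f g : V →ₗ[ℂ] V, finrank ℂ (range (f ∘ₗ g - g ∘ₗ f)) ≤ 1 →
      ∃ (v : V) (μ ν : ℂ), v ≠ 0 ∧ f v = μ • v ∧ g v = ν • v := by
  intro N
  induction N with
  | zero =>
    intro V _ _ _ hN hpos
    omega
  | succ N ih =>
    intro V _ _ _ hN hpos f g hrank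
    have : Nontrivial V := Module.finrank_pos_iff.mp hpos
    obtain ⟨μ, hμ⟩ := Module.End.exists_eigenvalue f
    obtain ⟨v0, hv0⟩ := hμ.exists_hasEigenvector
    set c : V →ₗ[ℂ] V := f ∘ₗ g - g ∘ₗ f with hc
    set f' : V →ₗ[ℂ] V := f - μ • LinearMap.id with hf'
    have hfc : ∀ x, f x = f' x + μ • x := by
      intro x; simp [hf']
    have hcomm : ∀ x, f' (g x) - g (f' x) = c x := by
      intro x
      simp only [hf', hc, LinearMap.sub_apply, LinearMap.comp_apply, LinearMap.smul_apply,
        LinearMap.id_apply, map_sub, _root_.map_smul]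
      abel
    have hv0' : f' v0 = 0 := by
      have := hv0.apply_eq_smul
      simp [hf', this]
    by_cases hcase : ker f' ≤ ker c
    · -- g preserves ker f'; take an eigenvector of g restricted to ker f'
      have hK : ∀ x ∈ ker f', g x ∈ ker f' := by
        intro x hx
        have hx0 : f' x = 0 := hx
        have hcx : c x = 0 := hcase hx
        have := hcomm x
        rw [hx0, map_zero, sub_zero, hcx] at this
        exact this
      have hKnt : Nontrivial (ker f') := by
        refine nontrivial_of_ne ⟨v0, hv0'⟩ 0 ?_
        simp [Subtype.ext_iff, hv0.2]
      obtain ⟨ν, hν⟩ := Module.End.exists_eigenvalue (g.restrict hK)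
      obtain ⟨w, hw⟩ := hν.exists_hasEigenvector
      refine ⟨(w : V), μ, ν, ?_, ?_, ?_⟩
      · exact fun h => hw.2 (Submodule.coe_eq_zero.mp h)
      · have hwk : f' (w : V) = 0 := w.2
        have := hfc (w : V)
        rw [hwk, zero_add] at this
        exact this
      · have := hw.apply_eq_smul
        have h2 : g (w : V) = ν • (w : V) := by
          have h3 := congrArg (Subtype.val) this
          simpa [LinearMap.restrict_apply] using h3
        exact h2
    · -- range f' is a proper nonzero invariant subspace; induct
      rw [SetLike.le_def] at hcase
      push_neg at hcase
      obtain ⟨v, hvK, hvC⟩ := hcase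
      have hvK0 : f' v = 0 := hvK
      have hcv : c v ≠ 0 := hvC
      have hv0ne : v ≠ 0 := by rintro rfl; exact hcv (map_zero c)
      set W : Submodule ℂ V := range f' with hW
      have hcvW : c v ∈ W := by
        have := hcomm v
        rw [hvK0, map_zero, sub_zero] at this
        exact this ▸ ⟨g v, rfl⟩
      -- range c ≤ W
      have hrc : range c ≤ W := by
        have hspan : (ℂ ∙ c v) = range c := by
          apply Submodule.eq_of_le_of_finrank_le
          · rw [Submodule.span_singleton_le_iff_mem]; exact ⟨v, rfl⟩
          · rw [finrank_span_singleton hcv]; exact hrank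
        rw [← hspan]
        rw [Submodule.span_singleton_le_iff_mem]
        exact hcvW
      have hWg : ∀ x ∈ W, g x ∈ W := by
        rintro x ⟨u, rfl⟩
        have := hcomm u
        have : g (f' u) = f' (g u) - c u := by rw [← this]; abel
        rw [this]
        exact sub_mem ⟨g u, rfl⟩ (hrc ⟨u, rfl⟩)
      have hWf : ∀ x ∈ W, f' x ∈ W := fun x _ => ⟨x, rfl⟩
      have hWc : ∀ x ∈ W, c x ∈ W := fun x _ => hrc ⟨x, rfl⟩
      -- dimension bounds
      have hWpos : 0 < finrank ℂ W := by
        rw [Module.finrank_pos_iff]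
        exact nontrivial_of_ne ⟨c v, hcvW⟩ 0 (by simp [Subtype.ext_iff, hcv])
      have hkerpos : 0 < finrank ℂ (ker f') := by
        rw [Module.finrank_pos_iff]
        exact nontrivial_of_ne ⟨v, hvK0⟩ 0 (by simp [Subtype.ext_iff, hv0ne])
      have hWle : finrank ℂ W ≤ N := by
        have h5 := f'.finrank_range_add_finrank_ker
        rw [← hW] at h5
        omega
      -- commutator of restrictions
      have hrest : (f'.restrict hWf) ∘ₗ (g.restrict hWg) - (g.restrict hWg) ∘ₗ (f'.restrict hWf)
          = c.restrict hWc := by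
        ext x
        simp only [LinearMap.sub_apply, LinearMap.comp_apply, Submodule.coe_sub]
        rw [LinearMap.restrict_apply, LinearMap.restrict_apply, LinearMap.restrict_apply,
          LinearMap.restrict_apply, LinearMap.restrict_apply]
        exact hcomm x
      have hrank' : finrank ℂ (range ((f'.restrict hWf) ∘ₗ (g.restrict hWg)
          - (g.restrict hWg) ∘ₗ (f'.restrict hWf))) ≤ 1 := by
        rw [hrest]
        exact le_trans (rank_restrict_le W c hWc) hrank
      obtain ⟨w, a, b, hw0, hwa, hwb⟩ := ih W hWle hWpos (f'.restrict hWf) (g.restrict hWg) hrank'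
      refine ⟨(w : V), a + μ, b, ?_, ?_, ?_⟩
      · exact fun h => hw0 (Submodule.coe_eq_zero.mp h)
      · have h1 : f' (w : V) = a • (w : V) := by
          have := congrArg Subtype.val hwa
          simpa [LinearMap.restrict_apply] using this
        rw [hfc, h1, add_smul]
      · have := congrArg Subtype.val hwb
        simpa [LinearMap.restrict_apply] using this

lemma exists_invariant_chain (V : Type) [AddCommGroup V] [Module ℂ V] [FiniteDimensional ℂ V]
    (f g : V →ₗ[ℂ] V) (hrank : finrank ℂ (range (f ∘ₗ g - g ∘ₗ f)) ≤ 1) :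
    ∀ k, k ≤ finrank ℂ V → ∃ W : ℕ → Submodule ℂ V,
      (∀ i < k, W i ≤ W (i + 1)) ∧
      (∀ i ≤ k, finrank ℂ (W i) = i ∧ (∀ x ∈ W i, f x ∈ W i) ∧ (∀ x ∈ W i, g x ∈ W i)) := by
  intro k
  induction k with
  | zero =>
    intro _
    refine ⟨fun _ => ⊥, by omega, ?_⟩
    intro i hi
    interval_cases i
    refine ⟨finrank_bot ℂ V, by simp, by simp⟩
  | succ k ih =>
    intro hk
    obtain ⟨W, hmono, hprop⟩ := ih (by omega)
    set T := W k with hT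
    obtain ⟨hTrank, hTf, hTg⟩ := hprop k le_rfl
    have hle_f : T ≤ T.comap f := fun x hx => hTf x hx
    have hle_g : T ≤ T.comap g := fun x hx => hTg x hx
    set c : V →ₗ[ℂ] V := f ∘ₗ g - g ∘ₗ f with hc
    have hle_c : T ≤ T.comap c := by
      intro x hx
      have : c x = f (g x) - g (f x) := by simp [hc]
      have hm : f (g x) - g (f x) ∈ T := sub_mem (hTf _ (hTg _ hx)) (hTg _ (hTf _ hx))
      simpa [Submodule.mem_comap, this] using hm
    set fQ := T.mapQ T f hle_f with hfQ
    set gQ := T.mapQ T g hle_g with hgQ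
    -- quotient is nontrivial
    have hq : finrank ℂ (V ⧸ T) + finrank ℂ T = finrank ℂ V :=
      Submodule.finrank_quotient_add_finrank T
    have hTrank' : finrank ℂ T = k := hTrank
    have hqpos : 0 < finrank ℂ (V ⧸ T) := by omega
    have hcommQ : fQ ∘ₗ gQ - gQ ∘ₗ fQ = T.mapQ T c hle_c := by
      apply Submodule.linearMap_qext
      ext x
      simp [hfQ, hgQ, Submodule.mapQ_apply, hc, Submodule.mkQ_apply]
    have hrankQ : finrank ℂ (range (fQ ∘ₗ gQ - gQ ∘ₗ fQ)) ≤ 1 := by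
      rw [hcommQ]
      exact le_trans (rank_mapQ_le T c hle_c) hrank
    obtain ⟨vq, μ, ν, hvq0, hfv, hgv⟩ :=
      exists_common_eigenvector (finrank ℂ (V ⧸ T)) (V ⧸ T) le_rfl hqpos fQ gQ hrankQ
    obtain ⟨v, rfl⟩ := T.mkQ_surjective vq
    have hvT : v ∉ T := by
      intro hv
      exact hvq0 (by simpa [Submodule.Quotient.mk_eq_zero] using hv)
    have hv0 : v ≠ 0 := fun h => hvT (h ▸ T.zero_mem)
    set T' : Submodule ℂ V := T ⊔ (ℂ ∙ v) with hT'
    have hfvT : f v - μ • v ∈ T := by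
      have : T.mkQ (f v) = T.mkQ (μ • v) := by
        have h1 : fQ (T.mkQ v) = T.mkQ (f v) := by simp [hfQ, Submodule.mapQ_apply]
        rw [← h1, hfv]; simp
      exact (Submodule.Quotient.eq T).mp this
    have hgvT : g v - ν • v ∈ T := by
      have : T.mkQ (g v) = T.mkQ (ν • v) := by
        have h1 : gQ (T.mkQ v) = T.mkQ (g v) := by simp [hgQ, Submodule.mapQ_apply]
        rw [← h1, hgv]; simp
      exact (Submodule.Quotient.eq T).mp this
    have hvT' : v ∈ T' := Submodule.mem_sup_right (Submodule.mem_span_singleton_self v)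
    have hTT' : T < T' := by
      refine lt_of_le_of_ne le_sup_left ?_
      intro h
      exact hvT (h ▸ hvT')
    have hT'rank : finrank ℂ T' = k + 1 := by
      have h1 : finrank ℂ T' + finrank ℂ (T ⊓ (ℂ ∙ v) : Submodule ℂ V)
          = finrank ℂ T + finrank ℂ (ℂ ∙ v : Submodule ℂ V) :=
        Submodule.finrank_sup_add_finrank_inf_eq T (ℂ ∙ v)
      have h2 : finrank ℂ (ℂ ∙ v : Submodule ℂ V) = 1 := finrank_span_singleton hv0
      have h3 : finrank ℂ T < finrank ℂ T' := Submodule.finrank_lt_finrank_of_lt hTT'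
      omega
    have hinv : ∀ (h : V →ₗ[ℂ] V) (lam : ℂ), (∀ x ∈ T, h x ∈ T) → h v - lam • v ∈ T →
        ∀ x ∈ T', h x ∈ T' := by
      intro h lam hhT hhv x hx
      rw [hT', Submodule.mem_sup] at hx
      obtain ⟨t, ht, s, hs, rfl⟩ := hx
      obtain ⟨a, rfl⟩ := Submodule.mem_span_singleton.mp hs
      rw [map_add, _root_.map_smul]
      refine add_mem (Submodule.mem_sup_left (hhT t ht)) (Submodule.smul_mem _ a ?_)
      have : h v = (h v - lam • v) + lam • v := by abel
      rw [this]
      exact add_mem (Submodule.mem_sup_left hhv) (Submodule.smul_mem _ lam hvT')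
    refine ⟨fun i => if i = k + 1 then T' else W i, ?_, ?_⟩
    · intro i hi
      beta_reduce
      by_cases h1 : i = k
      · rw [h1, if_neg (by omega : ¬ k = k + 1), if_pos rfl]
        exact le_of_lt hTT'
      · have hik : i < k := by omega
        rw [if_neg (by omega : ¬ i = k + 1), if_neg (by omega : ¬ i + 1 = k + 1)]
        exact hmono i hik
    · intro i hi
      beta_reduce
      by_cases h1 : i = k + 1
      · rw [h1, if_pos rfl]
        exact ⟨hT'rank, hinv f μ hTf hfvT, hinv g ν hTg hgvT⟩
      · rw [if_neg h1]
        exact hprop i (by omega)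

lemma exists_triangular_basis (V : Type) [AddCommGroup V] [Module ℂ V] [FiniteDimensional ℂ V]
    (n : ℕ) (hn : finrank ℂ V = n) (f g : V →ₗ[ℂ] V)
    (hrank : finrank ℂ (range (f ∘ₗ g - g ∘ₗ f)) ≤ 1) :
    ∃ b : Basis (Fin n) ℂ V,
      (∀ i j : Fin n, (j : ℕ) < (i : ℕ) → b.repr (f (b j)) i = 0) ∧
      (∀ i j : Fin n, (j : ℕ) < (i : ℕ) → b.repr (g (b j)) i = 0) := by
  obtain ⟨W, hmono, hprop⟩ := exists_invariant_chain V f g hrank n (le_of_eq hn.symm)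
  have hex : ∀ i : Fin n, ∃ x, x ∈ W ((i : ℕ) + 1) ∧ x ∉ W (i : ℕ) := by
    intro i
    have h1 : (W (i : ℕ)) < W ((i : ℕ) + 1) := by
      refine lt_of_le_of_ne (hmono (i : ℕ) i.2) ?_
      intro heq
      have r1 := (hprop (i : ℕ) (by omega)).1
      have r2 := (hprop ((i : ℕ) + 1) (by omega)).1
      rw [heq] at r1
      omega
    obtain ⟨x, hx1, hx2⟩ := SetLike.exists_of_lt h1
    exact ⟨x, hx1, hx2⟩
  choose b hb1 hb2 using hex
  have hspan : ∀ k, k ≤ n → W k = Submodule.span ℂ (b '' {j : Fin n | (j : ℕ) < k}) := by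
    intro k
    induction k with
    | zero =>
      intro _
      have h0 : W 0 = ⊥ := Submodule.finrank_eq_zero.mp (hprop 0 (by omega)).1
      have himg : {j : Fin n | (j : ℕ) < 0} = ∅ := by ext j; simp
      rw [h0, himg]
      simp
    | succ k ihk =>
      intro hk
      have hkn : k < n := by omega
      set bk := b ⟨k, hkn⟩ with hbk
      have hbk1 : bk ∈ W (k + 1) := hb1 ⟨k, hkn⟩
      have hbk2 : bk ∉ W k := hb2 ⟨k, hkn⟩
      have hW : W (k + 1) = W k ⊔ (ℂ ∙ bk) := by
        symm
        apply Submodule.eq_of_le_of_finrank_le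
        · refine sup_le (hmono k (by omega)) ?_
          rwa [Submodule.span_singleton_le_iff_mem]
        · have hlt : W k < W k ⊔ (ℂ ∙ bk) := by
            refine lt_of_le_of_ne le_sup_left ?_
            intro heq
            exact hbk2 (heq ▸ Submodule.mem_sup_right (Submodule.mem_span_singleton_self bk))
          have h2 := Submodule.finrank_lt_finrank_of_lt hlt
          have r1 := (hprop k (by omega)).1
          have r2 := (hprop (k + 1) (by omega)).1
          omega
      have himg : b '' {j : Fin n | (j : ℕ) < k + 1}
          = b '' {j : Fin n | (j : ℕ) < k} ∪ {bk} := by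
        have hset : {j : Fin n | (j : ℕ) < k + 1}
            = {j : Fin n | (j : ℕ) < k} ∪ {(⟨k, hkn⟩ : Fin n)} := by
          ext j
          simp only [Set.mem_setOf_eq, Set.mem_union, Set.mem_singleton_iff, Fin.ext_iff]
          omega
        rw [hset, Set.image_union, Set.image_singleton, hbk]
      rw [hW, ihk (by omega), himg, Submodule.span_union]
  have hb0 : ∀ i : Fin n, b i ∈ W ((i : ℕ) + 1) := hb1
  have htop : ⊤ ≤ Submodule.span ℂ (Set.range b) := by
    have h1 : W n = ⊤ := Submodule.eq_top_of_finrank_eq (by rw [(hprop n le_rfl).1, hn])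
    have h2 : {j : Fin n | (j : ℕ) < n} = Set.univ := by ext j; simp [j.2]
    rw [← h1, hspan n le_rfl, h2, Set.image_univ]
  have hcard : Fintype.card (Fin n) = finrank ℂ V := by simp [hn]
  set B := basisOfTopLeSpanOfCardEqFinrank b htop hcard with hBdef
  have hBc : ⇑B = b := coe_basisOfTopLeSpanOfCardEqFinrank b htop hcard
  have key : ∀ h : V →ₗ[ℂ] V, (∀ k, k ≤ n → ∀ x ∈ W k, h x ∈ W k) →
      ∀ i j : Fin n, (j : ℕ) < (i : ℕ) → B.repr (h (B j)) i = 0 := by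
    intro h hinv i j hij
    have hmem : h (b j) ∈ W ((j : ℕ) + 1) :=
      hinv ((j : ℕ) + 1) (by omega) (b j) (hb0 j)
    rw [hspan ((j : ℕ) + 1) (by omega)] at hmem
    rw [← hBc] at hmem
    have hsupp := (Basis.mem_span_image B).mp hmem
    have hnotin : i ∉ {l : Fin n | (l : ℕ) < (j : ℕ) + 1} := by
      simp only [Set.mem_setOf_eq]
      omega
    exact Finsupp.notMem_support_iff.mp
      (fun hs => hnotin (hsupp (Finset.mem_coe.mpr hs)))
  exact ⟨B, key f (fun k hk => (hprop k hk).2.1), key g (fun k hk => (hprop k hk).2.2)⟩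

end Laffey

/-- If `[X,Y]` has rank at most `1`, then `X` and `Y` can be simultaneously
conjugated into upper triangular form. -/
theorem stmt10 (n : ℕ) (X Y : Matrix (Fin n) (Fin n) ℂ)
    (h : (X * Y - Y * X).rank ≤ 1) :
    ∃ g : GL (Fin n) ℂ,
      Matrix.BlockTriangular
        ((↑g : Matrix (Fin n) (Fin n) ℂ) * X * (↑(g⁻¹) : Matrix (Fin n) (Fin n) ℂ)) id ∧
      Matrix.BlockTriangular
        ((↑g : Matrix (Fin n) (Fin n) ℂ) * Y * (↑(g⁻¹) : Matrix (Fin n) (Fin n) ℂ)) id := by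
  set fL := X.mulVecLin with hfL
  set gL := Y.mulVecLin with hgL
  have hsub : (X * Y - Y * X).mulVecLin = fL ∘ₗ gL - gL ∘ₗ fL := by
    rw [← Matrix.toLin'_apply', map_sub, Matrix.toLin'_apply', Matrix.toLin'_apply',
      Matrix.mulVecLin_mul, Matrix.mulVecLin_mul, hfL, hgL]
  have hr : Module.finrank ℂ (LinearMap.range ((X * Y - Y * X).mulVecLin)) ≤ 1 := h
  rw [hsub] at hr
  have hn : Module.finrank ℂ (Fin n → ℂ) = n := by simp
  obtain ⟨B, hBf, hBg⟩ := exists_triangular_basis (Fin n → ℂ) n hn fL gL hr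
  set e := Pi.basisFun ℂ (Fin n) with he
  set A := B.toMatrix ⇑e with hA
  set A' := e.toMatrix ⇑B with hA'
  have hAA' : A * A' = 1 := B.toMatrix_mul_toMatrix_flip e
  have hA'A : A' * A = 1 := e.toMatrix_mul_toMatrix_flip B
  refine ⟨⟨A, A', hAA', hA'A⟩, ?_, ?_⟩
  · have h1 : LinearMap.toMatrix e e fL = X := by
      rw [he, LinearMap.toMatrix_eq_toMatrix']
      rw [hfL, ← Matrix.toLin'_apply']
      exact LinearMap.toMatrix'_toLin' X
    have h2 : A * X * A' = LinearMap.toMatrix B B fL := by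
      rw [← h1, hA, hA']
      exact basis_toMatrix_mul_linearMap_toMatrix_mul_basis_toMatrix B e B e fL
    show Matrix.BlockTriangular (A * X * A') _root_.id
    rw [h2]
    intro i j hij
    rw [LinearMap.toMatrix_apply]
    exact hBf i j hij
  · have h1 : LinearMap.toMatrix e e gL = Y := by
      rw [he, LinearMap.toMatrix_eq_toMatrix']
      rw [hgL, ← Matrix.toLin'_apply']
      exact LinearMap.toMatrix'_toLin' Y
    have h2 : A * Y * A' = LinearMap.toMatrix B B gL := by
      rw [← h1, hA, hA']
      exact basis_toMatrix_mul_linearMap_toMatrix_mul_basis_toMatrix B e B e gL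
    show Matrix.BlockTriangular (A * Y * A') _root_.id
    rw [h2]
    intro i j hij
    rw [LinearMap.toMatrix_apply]
    exact hBg i j hij
end
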